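/- Assume Γ ⊆ ℒ is consistent and compositional. Let π be a maximal model of Γ and π' any model of Γ. Then V_{π'} ⊆ V_π; furthermore V_{π'} = V_π if and only if π' is a maximal model of Γ; and for any outcomes α, β, if α ≡_π β then α ≡_{π''} β for every model π'' of Γ. -/

import Mathlib

namespace LexPref

/-- A pair consisting of a variable and a total order (as a binary relation) on its domain. -/
structure LexPair (ι : Type*) (D : ι → Type*) where
  var : ι
  ord : D var → D var → Prop
  isLin : IsLinearOrder (D var) ord

/-- An outcome assigns a value to every variable. -/
abbrev Outcome (ι : Type*) (D : ι → Type*) := ∀ i, D i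

/-- A lexicographic model: a list of pairs (variable, total order) with pairwise
distinct variables. -/
abbrev LexModel (ι : Type*) (D : ι → Type*) :=
  { l : List (LexPair ι D) // (l.map LexPair.var).Nodup }

variable {ι : Type*} {D : ι → Type*}

/-- The list of variables occurring in a lex model. -/
def vars (π : LexModel ι D) : List ι := π.1.map LexPair.var

/-- The empty lex model. -/
def emptyModel : LexModel ι D := ⟨[], List.nodup_nil⟩

/-- Composition of lex models: `π` followed by the pairs of `π'` whose variable does
not occur in `π`. -/
def comp [DecidableEq ι] (π π' : LexModel ι D) : LexModel ι D :=
  ⟨π.1 ++ π'.1.filter (fun p => decide (p.var ∉ vars π)), by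
    have h1 : (π'.1.filter (fun p => decide (p.var ∉ vars π))).Sublist π'.1 :=
      List.filter_sublist
    rw [List.map_append, List.nodup_append]
    refine ⟨π.2, (h1.map LexPair.var).nodup π'.2, ?_⟩
    intro x hx y hy hxy
    obtain ⟨p, hp, rfl⟩ := List.mem_map.mp hy
    have hd := List.of_mem_filter hp
    simp only [decide_eq_true_eq] at hd
    subst hxy
    exact hd hx⟩

/-- `π'` extends `π`: `π' ≠ π` and the sequence `π'` begins with `π`. -/
def Extends (π' π : LexModel ι D) : Prop := π' ≠ π ∧ π.1 <+: π'.1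

/-- `π' ⊒ π`: `π'` extends or equals `π`. -/
def ExtendsEq (π' π : LexModel ι D) : Prop := π.1 <+: π'.1

/-- Lexicographic weak preference along a list of pairs. -/
def prefList : List (LexPair ι D) → Outcome ι D → Outcome ι D → Prop
  | [], _, _ => True
  | p :: rest, α, β =>
      (α p.var ≠ β p.var ∧ p.ord (α p.var) (β p.var)) ∨
      (α p.var = β p.var ∧ prefList rest α β)

/-- Lexicographic strict preference along a list of pairs. -/
def sprefList : List (LexPair ι D) → Outcome ι D → Outcome ι D → Prop
  | [], _, _ => False
  | p :: rest, α, β =>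
      (α p.var ≠ β p.var ∧ p.ord (α p.var) (β p.var)) ∨
      (α p.var = β p.var ∧ sprefList rest α β)

/-- `α ≽_π β`. -/
def pref (π : LexModel ι D) (α β : Outcome ι D) : Prop := prefList π.1 α β

/-- `α ≻_π β`. -/
def spref (π : LexModel ι D) (α β : Outcome ι D) : Prop := sprefList π.1 α β

/-- `α ≡_π β`: the outcomes agree on all variables of `π`. -/
def eqOn (π : LexModel ι D) (α β : Outcome ι D) : Prop := ∀ X ∈ vars π, α X = β X

section Language

variable {L : Type*} (sat : LexModel ι D → L → Prop)

/-- `π ⊨ Γ`. -/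
def satSet (π : LexModel ι D) (Γ : Set L) : Prop := ∀ φ ∈ Γ, sat π φ

/-- `Γ` is consistent: some lex model satisfies it. -/
def Consistent (Γ : Set L) : Prop := ∃ π, satSet sat π Γ

/-- `π ⊨* φ`: some `π' ⊒ π` satisfies `φ`. -/
def satStar (π : LexModel ι D) (φ : L) : Prop := ∃ π', ExtendsEq π' π ∧ sat π' φ

/-- `π ⊨* Γ`. -/
def satStarSet (π : LexModel ι D) (Γ : Set L) : Prop := ∀ φ ∈ Γ, satStar sat π φ

/-- `φ` is compositional. -/
def CompositionalStmt [DecidableEq ι] (φ : L) : Prop :=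
  ∀ π π', sat π φ → sat π' φ → sat (comp π π') φ

/-- `Γ` is compositional. -/
def Compositional [DecidableEq ι] (Γ : Set L) : Prop :=
  ∀ φ ∈ Γ, CompositionalStmt sat φ

/-- `φ` is strongly compositional. -/
def StronglyCompositionalStmt [DecidableEq ι] (φ : L) : Prop :=
  ∀ π π', satStar sat π φ → sat π' φ → sat (comp π π') φ

/-- `Γ` is strongly compositional. -/
def StronglyCompositional [DecidableEq ι] (Γ : Set L) : Prop :=
  ∀ φ ∈ Γ, StronglyCompositionalStmt sat φ

/-- `π` is a maximal model of `Γ`. -/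
def MaximalModel (π : LexModel ι D) (Γ : Set L) : Prop :=
  satSet sat π Γ ∧ ∀ π', Extends π' π → ¬ satSet sat π' Γ

/-- `π` is a maximal `⊨*`-model of `Γ`. -/
def MaximalStarModel (π : LexModel ι D) (Γ : Set L) : Prop :=
  satStarSet sat π Γ ∧ ∀ π', Extends π' π → ¬ satStarSet sat π' Γ

end Language

/-- `O_σ(𝒜)`: the optimal elements of `A` with respect to `σ`. -/
def opt (σ : LexModel ι D) (A : Set (Outcome ι D)) : Set (Outcome ι D) :=
  {α ∈ A | ∀ β ∈ A, pref σ α β}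

/-- Iterated optimisation `𝒜_{π₁,…,π_k}`. -/
def iterOpt : List (LexModel ι D) → Set (Outcome ι D) → Set (Outcome ι D)
  | [], A => A
  | σ :: rest, A => iterOpt rest (opt σ A)

end LexPref

/-!
If `π` is a maximal model of a compositional `Γ` and `π'` is any model, then `π ∘ π'` is again a
model and begins with `π`, so by maximality it equals `π`: no variable of `π'` lies outside `V_π`.
Everything else follows from this inclusion. In particular, when `V_{π'} = V_π`, any proper
extension of `π'` introduces a variable outside `V_{π'} = V_π` and so cannot be a model.
-/

namespace LexPref

section

variable {ι : Type*} {D : ι → Type*}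

theorem Extends.exists_var_not_mem {π π' : LexModel ι D} (h : Extends π' π) :
    ∃ X ∈ vars π', X ∉ vars π := by
  obtain ⟨hne, t, ht⟩ := h
  cases t with
  | nil => exact absurd (Subtype.ext (by simpa using ht.symm)) hne
  | cons p t =>
    have hnd := π'.2
    rw [← ht] at hnd
    simp only [List.map_append, List.map_cons, List.nodup_append] at hnd
    refine ⟨p.var, ?_, fun hp => hnd.2.2 _ hp _ List.mem_cons_self rfl⟩
    simp [vars, ← ht]

section Comp

variable [DecidableEq ι]

theorem vars_subset_of_comp_eq {π π' : LexModel ι D} (h : comp π π' = π) :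
    vars π' ⊆ vars π := by
  have hnil : π'.1.filter (fun p => decide (p.var ∉ vars π)) = [] := by
    simpa [comp] using congrArg Subtype.val h
  intro X hX
  obtain ⟨p, hp, rfl⟩ := List.mem_map.mp hX
  simpa using List.filter_eq_nil_iff.mp hnil p hp

theorem extends_comp {π π' : LexModel ι D} (h : comp π π' ≠ π) : Extends (comp π π') π :=
  ⟨h, _, rfl⟩

variable {L : Type*} {sat : LexModel ι D → L → Prop} {Γ : Set L}

theorem MaximalModel.comp_eq (hcomp : Compositional sat Γ) {π π' : LexModel ι D}
    (hmax : MaximalModel sat π Γ) (h' : satSet sat π' Γ) : comp π π' = π := by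
  by_contra hne
  exact hmax.2 _ (extends_comp hne) fun φ hφ => hcomp φ hφ π π' (hmax.1 φ hφ) (h' φ hφ)

theorem MaximalModel.vars_subset (hcomp : Compositional sat Γ) {π π' : LexModel ι D}
    (hmax : MaximalModel sat π Γ) (h' : satSet sat π' Γ) : vars π' ⊆ vars π :=
  vars_subset_of_comp_eq (hmax.comp_eq hcomp h')

theorem MaximalModel.vars_toFinset_subset (hcomp : Compositional sat Γ) {π π' : LexModel ι D}
    (hmax : MaximalModel sat π Γ) (h' : satSet sat π' Γ) :
    (vars π').toFinset ⊆ (vars π).toFinset :=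
  Multiset.toFinset_subset.mpr (Multiset.coe_subset.mpr (hmax.vars_subset hcomp h'))

end Comp

end

theorem maximal_model_properties_general {ι : Type*} {D : ι → Type*} [DecidableEq ι]
    {L : Type*}
    (sat : LexModel ι D → L → Prop) (Γ : Set L)
    (hcomp : Compositional sat Γ)
    (π π' : LexModel ι D)
    (hmax : MaximalModel sat π Γ) (h' : satSet sat π' Γ) :
    (vars π').toFinset ⊆ (vars π).toFinset ∧
    ((vars π').toFinset = (vars π).toFinset ↔ MaximalModel sat π' Γ) ∧
    (∀ α β : Outcome ι D, eqOn π α β →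
      ∀ π'', satSet sat π'' Γ → eqOn π'' α β) := by
  refine ⟨hmax.vars_toFinset_subset hcomp h', ⟨fun heq => ⟨h', fun π'' hext h'' => ?_⟩,
    fun hmax' => ?_⟩, ?_⟩
  · obtain ⟨X, hX, hX'⟩ := hext.exists_var_not_mem
    have hXπ := hmax.vars_toFinset_subset hcomp h'' (List.mem_toFinset.mpr hX)
    exact hX' (List.mem_toFinset.mp (heq ▸ hXπ))
  · exact (hmax.vars_toFinset_subset hcomp h').antisymm (hmax'.vars_toFinset_subset hcomp hmax.1)
  · exact fun α β hαβ π'' h'' X hX => hαβ X (hmax.vars_subset hcomp h'' hX)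

/-- for consistent compositional `Γ`, with `π` a maximal model and
`π'` any model: `V_{π'} ⊆ V_π`; `V_{π'} = V_π` iff `π'` is maximal; and outcomes
equivalent in `π` are equivalent in every model of `Γ`. -/
theorem maximal_model_properties {ι : Type*} {D : ι → Type*} [DecidableEq ι]
    [Fintype ι] [∀ i, Fintype (D i)] {L : Type*}
    (sat : LexModel ι D → L → Prop) (Γ : Set L)
    (hcons : Consistent sat Γ) (hcomp : Compositional sat Γ)
    (π π' : LexModel ι D)
    (hmax : MaximalModel sat π Γ) (h' : satSet sat π' Γ) :
    (vars π').toFinset ⊆ (vars π).toFinset ∧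
    ((vars π').toFinset = (vars π).toFinset ↔ MaximalModel sat π' Γ) ∧
    (∀ α β : Outcome ι D, eqOn π α β →
      ∀ π'', satSet sat π'' Γ → eqOn π'' α β) :=
  maximal_model_properties_general sat Γ hcomp π π' hmax h'

end LexPref
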